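/- arXiv:2404.07153 — 4 statements merged into one kernel-verified Lean document; each statement's English description precedes it below -/
import Mathlib

section
/- Let S : ℤ × ℤ → ℝ be a scene, k a crop size, m ≥ 0, Δ ≥ 0 with 2Δ ≤ m, and g : (Fin k × Fin k → ℝ) → ℝ a scoring function. Suppose p ∈ (Finset.Icc Δ (m − Δ)) ×ˢ (Finset.Icc Δ (m − Δ)) and that p is the strict maximizer of q ↦ g (cropAt S q) over the union grid U = (Finset.Icc (−Δ) (m + Δ)) ×ˢ (Finset.Icc (−Δ) (m + Δ)), i.e., g (cropAt S q) < g (cropAt S p) for every q ∈ U with q ≠ p. Then for every offset δ = (δ₁, δ₂) with −Δ ≤ δ₁, δ₂ ≤ Δ, the position p lies in the window grid (Finset.Icc δ₁ (m + δ₁)) ×ˢ (Finset.Icc δ₂ (m + δ₂)) and is the strict maximizer of q ↦ g (cropAt S q) over that window grid; consequently the crop selected by maximizing the score over the crops of the δ-translated image is cropAt S p, the same crop for all such translations. -/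
def cropAt (S : ℤ × ℤ → ℝ) (k : ℕ) (p : ℤ × ℤ) : Fin k × Fin k → ℝ :=
  fun q => S (p.1 + (q.1 : ℕ), p.2 + (q.2 : ℕ))

section Windows

variable {α : Type*} [AddCommGroup α] [PartialOrder α] [IsOrderedAddMonoid α]
  [LocallyFiniteOrder α] {m Δ d : α}

theorem Icc_add_subset_Icc_neg_add (h₁ : -Δ ≤ d) (h₂ : d ≤ Δ) :
    Finset.Icc d (m + d) ⊆ Finset.Icc (-Δ) (m + Δ) :=
  Finset.Icc_subset_Icc h₁ (by gcongr)

theorem Icc_sub_subset_Icc_add (h₁ : -Δ ≤ d) (h₂ : d ≤ Δ) :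
    Finset.Icc Δ (m - Δ) ⊆ Finset.Icc d (m + d) :=
  Finset.Icc_subset_Icc h₂ (by rw [sub_eq_add_neg]; gcongr)

end Windows

theorem strict_max_stable_under_translations_general (S : ℤ × ℤ → ℝ) (k : ℕ) (m Δ : ℤ)
    (g : (Fin k × Fin k → ℝ) → ℝ) (p : ℤ × ℤ)
    (hp : p ∈ (Finset.Icc Δ (m - Δ)) ×ˢ (Finset.Icc Δ (m - Δ)))
    (hmax : ∀ q ∈ (Finset.Icc (-Δ) (m + Δ)) ×ˢ (Finset.Icc (-Δ) (m + Δ)),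
      q ≠ p → g (cropAt S k q) < g (cropAt S k p)) :
    ∀ δ : ℤ × ℤ, -Δ ≤ δ.1 → δ.1 ≤ Δ → -Δ ≤ δ.2 → δ.2 ≤ Δ →
      p ∈ (Finset.Icc δ.1 (m + δ.1)) ×ˢ (Finset.Icc δ.2 (m + δ.2)) ∧
      ∀ q ∈ (Finset.Icc δ.1 (m + δ.1)) ×ˢ (Finset.Icc δ.2 (m + δ.2)),
        q ≠ p → g (cropAt S k q) < g (cropAt S k p) := by
  intro δ h₁ h₂ h₃ h₄
  have hp_window := Finset.product_subset_product
    (Icc_sub_subset_Icc_add h₁ h₂) (Icc_sub_subset_Icc_add h₃ h₄) hp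
  have window_subset_union := Finset.product_subset_product
    (Icc_add_subset_Icc_neg_add (m := m) h₁ h₂) (Icc_add_subset_Icc_neg_add (m := m) h₃ h₄)
  exact ⟨hp_window, fun q hq => hmax q (window_subset_union hq)⟩

/-- If `p` lies in the interior grid `Icc Δ (m - Δ) ×ˢ Icc Δ (m - Δ)` and is the
strict maximizer of the score over the union grid
`U = Icc (-Δ) (m + Δ) ×ˢ Icc (-Δ) (m + Δ)`, then for every offset `δ` with
`-Δ ≤ δ₁, δ₂ ≤ Δ`, `p` lies in the window grid
`Icc δ₁ (m + δ₁) ×ˢ Icc δ₂ (m + δ₂)` and is the strict maximizer of the score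
over that window grid; hence the crop selected by maximizing the score over the
crops of the `δ`-translated image is `cropAt S p`, the same for all such `δ`. -/
theorem strict_max_stable_under_translations (S : ℤ × ℤ → ℝ) (k : ℕ) (m Δ : ℤ)
    (hm : 0 ≤ m) (hΔ : 0 ≤ Δ) (h2 : 2 * Δ ≤ m)
    (g : (Fin k × Fin k → ℝ) → ℝ) (p : ℤ × ℤ)
    (hp : p ∈ (Finset.Icc Δ (m - Δ)) ×ˢ (Finset.Icc Δ (m - Δ)))
    (hmax : ∀ q ∈ (Finset.Icc (-Δ) (m + Δ)) ×ˢ (Finset.Icc (-Δ) (m + Δ)),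
      q ≠ p → g (cropAt S k q) < g (cropAt S k p)) :
    ∀ δ : ℤ × ℤ, -Δ ≤ δ.1 → δ.1 ≤ Δ → -Δ ≤ δ.2 → δ.2 ≤ Δ →
      p ∈ (Finset.Icc δ.1 (m + δ.1)) ×ˢ (Finset.Icc δ.2 (m + δ.2)) ∧
      ∀ q ∈ (Finset.Icc δ.1 (m + δ.1)) ×ˢ (Finset.Icc δ.2 (m + δ.2)),
        q ≠ p → g (cropAt S k q) < g (cropAt S k p) :=
  strict_max_stable_under_translations_general S k m Δ g p hp hmax
end

section
/- (Theorem 1.) Let k be a crop size, m ≥ 0 and Δ ≥ 0 integers with 2Δ ≤ m, g : (Fin k × Fin k → ℝ) → ℝ a scoring function, and U = (Finset.Icc (−Δ) (m + Δ)) ×ˢ (Finset.Icc (−Δ) (m + Δ)) the union grid of crop positions. Let ν be a probability mass function on scenes S : ℤ × ℤ → ℝ, and let A assign to each scene S in the support of ν a position A(S) ∈ U which is the strict maximizer of q ↦ g (cropAt S q) over U. Assume (the pseudo-random crop function hypothesis) that the pushforward of ν under A is the uniform PMF on U. Then the ν-probability of the adversary-success event — the set of scenes S for which there exists an offset δ =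 (δ₁, δ₂) with −Δ ≤ δ₁, δ₂ ≤ Δ such that A(S) is not the strict maximizer of q ↦ g (cropAt S q) over the window grid (Finset.Icc δ₁ (m + δ₁)) ×ˢ (Finset.Icc δ₂ (m + δ₂)) — is at most 1 − ((m + 1 − 2Δ) / (m + 1 + 2Δ))². -/
open Finset

def IsStrictArgmaxOn {α β : Type*} [LT β] (f : α → β) (s : Finset α) (p : α) : Prop :=
  p ∈ s ∧ ∀ q ∈ s, q ≠ p → f q < f p

theorem IsStrictArgmaxOn.mono {α β : Type*} [LT β] {f : α → β} {s t : Finset α} {p : α}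
    (h : IsStrictArgmaxOn f s p) (hts : t ⊆ s) (hp : p ∈ t) : IsStrictArgmaxOn f t p :=
  ⟨hp, fun q hq => h.2 q (hts hq)⟩

theorem isStrictArgmaxOn_window_of_mem_core {β : Type*} [LT β] {f : ℤ × ℤ → β} {m Δ : ℤ}
    {p δ : ℤ × ℤ} (hU : IsStrictArgmaxOn f (Icc (-Δ) (m + Δ) ×ˢ Icc (-Δ) (m + Δ)) p)
    (hp : p ∈ Icc Δ (m - Δ) ×ˢ Icc Δ (m - Δ))
    (h₁ : -Δ ≤ δ.1) (h₂ : δ.1 ≤ Δ) (h₃ : -Δ ≤ δ.2) (h₄ : δ.2 ≤ Δ) :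
    IsStrictArgmaxOn f (Icc δ.1 (m + δ.1) ×ˢ Icc δ.2 (m + δ.2)) p := by
  refine hU.mono (product_subset_product ?_ ?_) (product_subset_product ?_ ?_ hp) <;>
    exact Icc_subset_Icc (by omega) (by omega)

theorem PMF.toOuterMeasure_le_map_apply {α β : Type*} (p : PMF α) (f : α → β) {s : Set α}
    {t : Set β} (h : ∀ a ∈ p.support, a ∈ s → f a ∈ t) :
    p.toOuterMeasure s ≤ (p.map f).toOuterMeasure t := by
  rw [PMF.toOuterMeasure_map_apply]
  exact p.toOuterMeasure_mono fun a ha => h a ha.2 ha.1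

theorem PMF.toOuterMeasure_uniformOfFinset_compl {α : Type*} {s t : Finset α} (hs : s.Nonempty)
    (hts : t ⊆ s) :
    (PMF.uniformOfFinset s hs).toOuterMeasure (↑t)ᶜ = 1 - (#t : ENNReal) / #s := by
  classical
  have hcard : (#s : ENNReal) ≠ 0 := by simpa using hs.ne_empty
  rw [PMF.toOuterMeasure_uniformOfFinset_apply]
  convert_to ((#(s \ t) : ℕ) : ENNReal) / #s = _
  · congr 3; ext; simp [mem_sdiff]
  rw [card_sdiff_of_subset hts, ENNReal.natCast_sub, ENNReal.sub_div fun _ _ => hcard,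
    ENNReal.div_self hcard (ENNReal.natCast_ne_top _)]

theorem Int.card_Icc_product_Icc {a b : ℤ} (h : a ≤ b + 1) :
    (#(Icc a b ×ˢ Icc a b) : ℝ) = ((b + 1 - a : ℤ) : ℝ) ^ 2 := by
  rw [card_product, Nat.cast_mul, ← Int.cast_natCast, Int.card_Icc_of_le _ _ h, sq]

theorem card_core_div_card_union {m Δ : ℤ} (hΔ : 0 ≤ Δ) (h2 : 2 * Δ ≤ m) :
    (#(Icc Δ (m - Δ) ×ˢ Icc Δ (m - Δ)) : ENNReal) / #(Icc (-Δ) (m + Δ) ×ˢ Icc (-Δ) (m + Δ)) =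
      ENNReal.ofReal ((((m : ℝ) + 1 - 2 * (Δ : ℝ)) / ((m : ℝ) + 1 + 2 * (Δ : ℝ))) ^ 2) := by
  have hpos : (0 : ℝ) < m + 1 + 2 * Δ := by
    exact_mod_cast (show (0 : ℤ) < m + 1 + 2 * Δ by omega)
  rw [div_pow, ENNReal.ofReal_div_of_pos (pow_pos hpos 2), ← ENNReal.ofReal_natCast,
    ← ENNReal.ofReal_natCast, Int.card_Icc_product_Icc (by omega),
    Int.card_Icc_product_Icc (by omega)]
  push_cast
  ring_nf

/-- **Theorem 1 (RICS robustness bound).** If the crop-selection map `A`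
assigns to each scene in the support of `ν` the strict maximizer of the score
over the union grid `U`, and the pushforward of `ν` under `A` is the uniform
PMF on `U` (pseudo-random crop function), then the probability that an
adversary can change the selected crop with a realistic translation of size at
most `Δ` is bounded by `1 - ((m + 1 - 2Δ) / (m + 1 + 2Δ))²`. -/
theorem rics_adversarial_robustness_bound (k : ℕ) (m Δ : ℤ)
    (hΔ : 0 ≤ Δ) (h2 : 2 * Δ ≤ m)
    (g : (Fin k × Fin k → ℝ) → ℝ)
    (ν : PMF ((ℤ × ℤ) → ℝ)) (A : ((ℤ × ℤ) → ℝ) → ℤ × ℤ)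
    (hA : ∀ S ∈ ν.support,
      A S ∈ (Finset.Icc (-Δ) (m + Δ)) ×ˢ (Finset.Icc (-Δ) (m + Δ)) ∧
      ∀ q ∈ (Finset.Icc (-Δ) (m + Δ)) ×ˢ (Finset.Icc (-Δ) (m + Δ)), q ≠ A S →
        g (cropAt S k q) < g (cropAt S k (A S)))
    (hunif : ν.map A = PMF.uniformOfFinset
      ((Finset.Icc (-Δ) (m + Δ)) ×ˢ (Finset.Icc (-Δ) (m + Δ)))
      ((Finset.nonempty_Icc.mpr (by omega)).product (Finset.nonempty_Icc.mpr (by omega)))) :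
    ν.toOuterMeasure {S : (ℤ × ℤ) → ℝ |
        ∃ δ : ℤ × ℤ, -Δ ≤ δ.1 ∧ δ.1 ≤ Δ ∧ -Δ ≤ δ.2 ∧ δ.2 ≤ Δ ∧
          ¬ (A S ∈ (Finset.Icc δ.1 (m + δ.1)) ×ˢ (Finset.Icc δ.2 (m + δ.2)) ∧
            ∀ q ∈ (Finset.Icc δ.1 (m + δ.1)) ×ˢ (Finset.Icc δ.2 (m + δ.2)), q ≠ A S →
              g (cropAt S k q) < g (cropAt S k (A S)))}
      ≤ 1 - ENNReal.ofReal
          ((((m : ℝ) + 1 - 2 * (Δ : ℝ)) / ((m : ℝ) + 1 + 2 * (Δ : ℝ))) ^ 2) := by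
  set core := Icc Δ (m - Δ) ×ˢ Icc Δ (m - Δ)
  have hcore : core ⊆ Icc (-Δ) (m + Δ) ×ˢ Icc (-Δ) (m + Δ) :=
    product_subset_product (Icc_subset_Icc (by omega) (by omega))
      (Icc_subset_Icc (by omega) (by omega))
  refine le_of_le_of_eq (ν.toOuterMeasure_le_map_apply A (t := (↑core)ᶜ) ?_) ?_
  · rintro S hS ⟨δ, h₁, h₂, h₃, h₄, hfail⟩ hSc
    exact hfail (isStrictArgmaxOn_window_of_mem_core (hA S hS) hSc h₁ h₂ h₃ h₄)
  · rw [hunif, PMF.toOuterMeasure_uniformOfFinset_compl _ hcore, card_core_div_card_union hΔ h2]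
end

section
/- (Consistency lower bound, Equation 5.) Let m ≥ 0, Δ ≥ 0 be integers with Δ ≤ m, and let δ = (d₁, d₂) be an offset with |d₁| ≤ Δ and |d₂| ≤ Δ. Let U be the Finset ((Finset.Icc 0 m ∪ Finset.Icc d₁ (m + d₁)) ×ˢ (Finset.Icc 0 m ∪ Finset.Icc d₂ (m + d₂))) in ℤ × ℤ and let V be ((Finset.Icc 0 m ∩ Finset.Icc d₁ (m + d₁)) ×ˢ (Finset.Icc 0 m ∩ Finset.Icc d₂ (m + d₂))). Then for the uniform probability mass function on U, the probability of the event V is at least ((m + 1 − Δ) / (m + 1 + Δ))². -/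
/-!
Along each axis the two windows `[0, m]` and `[d, m + d]` overlap in `m + 1 - |d|` points and
cover `m + 1 + |d|`, and the grids are products of these, so the probability of `V` is
`∏ᵢ (m + 1 - |dᵢ|) / (m + 1 + |dᵢ|)`. Each factor is antitone in `|dᵢ|`, hence at least
`(m + 1 - Δ) / (m + 1 + Δ)`.
-/

open Finset

namespace PMF

theorem toOuterMeasure_uniformOfFinset_apply_of_subset {α : Type*} {s t : Finset α}
    (hs : s.Nonempty) (hts : t ⊆ s) :
    (uniformOfFinset s hs).toOuterMeasure t = ENNReal.ofReal ((#t : ℝ) / #s) := by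
  classical
  rw [toOuterMeasure_uniformOfFinset_apply]
  simp only [mem_coe]
  rw [filter_mem_eq_inter, inter_eq_right.mpr hts,
    ENNReal.ofReal_div_of_pos (by exact_mod_cast hs.card_pos), ENNReal.ofReal_natCast,
    ENNReal.ofReal_natCast]

end PMF

section Windows

variable (m d : ℤ)

theorem Int.card_Icc_inter_Icc_add (hd : |d| ≤ m + 1) :
    (#(Icc 0 m ∩ Icc d (m + d)) : ℤ) = m + 1 - |d| := by
  have hIcc : Icc 0 m ∩ Icc d (m + d) = Icc (max 0 d) (m + min 0 d) := by
    ext x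
    simp only [mem_inter, mem_Icc]
    omega
  rw [hIcc, Int.card_Icc]
  cases abs_cases d <;> omega

theorem Int.card_Icc_union_Icc_add (hd : |d| ≤ m + 1) :
    (#(Icc 0 m ∪ Icc d (m + d)) : ℤ) = m + 1 + |d| := by
  have hsum := congrArg (Nat.cast : ℕ → ℤ) (card_union_add_card_inter (Icc 0 m) (Icc d (m + d)))
  push_cast at hsum
  have hm : 0 ≤ m + 1 := (abs_nonneg d).trans hd
  rw [Int.card_Icc_inter_Icc_add m d hd, Int.card_Icc_of_le 0 m (by omega),
    Int.card_Icc_of_le d (m + d) (by omega)] at hsum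
  linarith

end Windows

theorem sub_div_add_le_sub_div_add {n a b : ℝ} (hn : 0 < n) (ha : 0 ≤ a) (hab : a ≤ b) :
    (n - b) / (n + b) ≤ (n - a) / (n + a) := by
  rw [div_le_div_iff₀ (by linarith) (by linarith)]
  nlinarith

theorem div_le_card_Icc_inter_div_card_Icc_union {m Δ d : ℤ} (hΔm : Δ ≤ m) (hd : |d| ≤ Δ) :
    ((m + 1 - Δ : ℝ) / (m + 1 + Δ)) ≤
      (#(Icc 0 m ∩ Icc d (m + d)) : ℝ) / #(Icc 0 m ∪ Icc d (m + d)) := by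
  have hdm : |d| ≤ m + 1 := by omega
  have hinter := congrArg (Int.cast : ℤ → ℝ) (Int.card_Icc_inter_Icc_add m d hdm)
  have hunion := congrArg (Int.cast : ℤ → ℝ) (Int.card_Icc_union_Icc_add m d hdm)
  push_cast at hinter hunion
  have hdΔ : |(d : ℝ)| ≤ Δ := by exact_mod_cast hd
  have hm : (0 : ℝ) ≤ m := by exact_mod_cast (abs_nonneg d).trans (hd.trans hΔm)
  rw [hinter, hunion]
  exact sub_div_add_le_sub_div_add (by linarith) (abs_nonneg _) hdΔ

theorem uniform_prob_shared_grid_ge_general (m Δ d₁ d₂ : ℤ)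
    (hm : 0 ≤ m) (hΔm : Δ ≤ m)
    (h1 : |d₁| ≤ Δ) (h2 : |d₂| ≤ Δ) :
    ENNReal.ofReal ((((m : ℝ) + 1 - (Δ : ℝ)) / ((m : ℝ) + 1 + (Δ : ℝ))) ^ 2)
      ≤ (PMF.uniformOfFinset
          ((Finset.Icc (0 : ℤ) m ∪ Finset.Icc d₁ (m + d₁)) ×ˢ
            (Finset.Icc (0 : ℤ) m ∪ Finset.Icc d₂ (m + d₂)))
          ((Finset.Nonempty.mono Finset.subset_union_left
              (Finset.nonempty_Icc.mpr hm)).product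
            (Finset.Nonempty.mono Finset.subset_union_left
              (Finset.nonempty_Icc.mpr hm)))).toOuterMeasure
        ↑((Finset.Icc (0 : ℤ) m ∩ Finset.Icc d₁ (m + d₁)) ×ˢ
          (Finset.Icc (0 : ℤ) m ∩ Finset.Icc d₂ (m + d₂))) := by
  rw [PMF.toOuterMeasure_uniformOfFinset_apply_of_subset _
    (product_subset_product (inter_subset_left.trans subset_union_left)
      (inter_subset_left.trans subset_union_left))]
  refine ENNReal.ofReal_le_ofReal ?_
  have hx := div_le_card_Icc_inter_div_card_Icc_union hΔm h1
  have hy := div_le_card_Icc_inter_div_card_Icc_union hΔm h2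
  have hr : (0 : ℝ) ≤ (m + 1 - Δ) / (m + 1 + Δ) := by
    have : (0 : ℝ) ≤ Δ := by exact_mod_cast (abs_nonneg d₁).trans h1
    have : (Δ : ℝ) ≤ m := by exact_mod_cast hΔm
    apply div_nonneg <;> linarith
  rw [card_product, card_product, Nat.cast_mul, Nat.cast_mul, mul_div_mul_comm, sq]
  exact mul_le_mul hx hy hr (hr.trans hx)

/-- **Consistency lower bound (Equation 5).** For an offset `δ = (d₁, d₂)` with
`|d₁|, |d₂| ≤ Δ ≤ m`, the uniform PMF on the union grid
`U = (Icc 0 m ∪ Icc d₁ (m + d₁)) ×ˢ (Icc 0 m ∪ Icc d₂ (m + d₂))` gives the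
shared grid `V = (Icc 0 m ∩ Icc d₁ (m + d₁)) ×ˢ (Icc 0 m ∩ Icc d₂ (m + d₂))`
probability at least `((m + 1 - Δ) / (m + 1 + Δ))²`. -/
theorem uniform_prob_shared_grid_ge (m Δ d₁ d₂ : ℤ)
    (hm : 0 ≤ m) (hΔ0 : 0 ≤ Δ) (hΔm : Δ ≤ m)
    (h1 : |d₁| ≤ Δ) (h2 : |d₂| ≤ Δ) :
    ENNReal.ofReal ((((m : ℝ) + 1 - (Δ : ℝ)) / ((m : ℝ) + 1 + (Δ : ℝ))) ^ 2)
      ≤ (PMF.uniformOfFinset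
          ((Finset.Icc (0 : ℤ) m ∪ Finset.Icc d₁ (m + d₁)) ×ˢ
            (Finset.Icc (0 : ℤ) m ∪ Finset.Icc d₂ (m + d₂)))
          ((Finset.Nonempty.mono Finset.subset_union_left
              (Finset.nonempty_Icc.mpr hm)).product
            (Finset.Nonempty.mono Finset.subset_union_left
              (Finset.nonempty_Icc.mpr hm)))).toOuterMeasure
        ↑((Finset.Icc (0 : ℤ) m ∩ Finset.Icc d₁ (m + d₁)) ×ˢ
          (Finset.Icc (0 : ℤ) m ∩ Finset.Icc d₂ (m + d₂))) :=
  uniform_prob_shared_grid_ge_general m Δ d₁ d₂ hm hΔm h1 h2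
end

section
/- (Theorem 2.) Let N be a positive integer, k a crop size, I : ZMod N × ZMod N → ℝ an image, and g : (Fin k × Fin k → ℝ) → ℝ any (deterministic) scoring function. Suppose c₀ is a cyclic crop of I (i.e., c₀ ∈ Set.range (cyclicCrop I)) that strictly maximizes g over the set of cyclic crops of I: for every c ∈ Set.range (cyclicCrop I) with c ≠ c₀, g c < g c₀. Then for every cyclic translation offset δ ∈ ZMod N × ZMod N, c₀ is also a cyclic crop of T_δ I and strictly maximizes g over Set.range (cyclicCrop (T_δ I)). Consequently, for any classifier f : (Fin k × Fin k → ℝ) → Y, the output of the crop-selection algorithm (apply f to the unique score-maximizing cyclic crop) on T_δ I equals its output on I; no integer cyclic translation can alter the output. -/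
/-- The cyclic crop of size `k` of an image `I : ZMod N × ZMod N → ℝ` at
position `(i, j)`: `(a, b) ↦ I (i + a, j + b)`. -/
def cyclicCrop {N : ℕ} (k : ℕ) (I : ZMod N × ZMod N → ℝ) (p : ZMod N × ZMod N) :
    Fin k × Fin k → ℝ :=
  fun q => I (p.1 + ((q.1 : ℕ) : ZMod N), p.2 + ((q.2 : ℕ) : ZMod N))

/-- The cyclic translation of an image `I` by `δ`:
`T_δ I (x, y) = I (x + δ₁, y + δ₂)`. -/
def cyclicTranslate {N : ℕ} (δ : ZMod N × ZMod N) (I : ZMod N × ZMod N → ℝ) :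
    ZMod N × ZMod N → ℝ :=
  fun x => I (x.1 + δ.1, x.2 + δ.2)

/-! Translating the image by `δ` only moves the crop at position `p` to position `p + δ`, and
`p ↦ p + δ` is a bijection of the torus, so the set of cyclic crops, and with it its unique strict
maximizer, is unchanged. -/

theorem cyclicCrop_cyclicTranslate {N : ℕ} (k : ℕ) (δ : ZMod N × ZMod N)
    (I : ZMod N × ZMod N → ℝ) (p : ZMod N × ZMod N) :
    cyclicCrop k (cyclicTranslate δ I) p = cyclicCrop k I (p + δ) := by
  funext q
  simp only [cyclicCrop, cyclicTranslate, Prod.fst_add, Prod.snd_add]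
  ring_nf

theorem range_cyclicCrop_cyclicTranslate {N : ℕ} (k : ℕ) (δ : ZMod N × ZMod N)
    (I : ZMod N × ZMod N → ℝ) :
    Set.range (cyclicCrop k (cyclicTranslate δ I)) = Set.range (cyclicCrop k I) := by
  have hcomp : cyclicCrop k (cyclicTranslate δ I) = cyclicCrop k I ∘ Equiv.addRight δ :=
    funext (cyclicCrop_cyclicTranslate k δ I)
  rw [hcomp, (Equiv.addRight δ).surjective.range_comp]

theorem eq_of_strict_max_of_strict_max {α β : Type*} [Preorder β] {S : Set α} {g : α → β}
    {a b : α} (ha : a ∈ S) (hb : b ∈ S)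
    (hmax_a : ∀ c ∈ S, c ≠ a → g c < g a) (hmax_b : ∀ c ∈ S, c ≠ b → g c < g b) :
    a = b := by
  by_contra hab
  exact lt_asymm (hmax_a b hb (Ne.symm hab)) (hmax_b a ha hab)

theorem cyclic_rics_invariant_general {Y : Type*} (N : ℕ) (k : ℕ)
    (I : ZMod N × ZMod N → ℝ) (g : (Fin k × Fin k → ℝ) → ℝ)
    (c₀ : Fin k × Fin k → ℝ)
    (hc₀ : c₀ ∈ Set.range (cyclicCrop k I))
    (hmax : ∀ c ∈ Set.range (cyclicCrop k I), c ≠ c₀ → g c < g c₀)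
    (f : (Fin k × Fin k → ℝ) → Y) :
    ∀ δ : ZMod N × ZMod N,
      c₀ ∈ Set.range (cyclicCrop k (cyclicTranslate δ I)) ∧
      (∀ c ∈ Set.range (cyclicCrop k (cyclicTranslate δ I)), c ≠ c₀ → g c < g c₀) ∧
      (∀ c ∈ Set.range (cyclicCrop k (cyclicTranslate δ I)),
        (∀ c' ∈ Set.range (cyclicCrop k (cyclicTranslate δ I)), c' ≠ c → g c' < g c) →
          f c = f c₀) := by
  intro δ
  rw [range_cyclicCrop_cyclicTranslate]
  refine ⟨hc₀, hmax, fun c hc hmax_c => ?_⟩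
  rw [eq_of_strict_max_of_strict_max hc hc₀ hmax_c hmax]

/-- **Theorem 2 (100% robustness to cyclic translations).** If `c₀` is a cyclic
crop of `I` strictly maximizing the score `g` over the cyclic crops of `I`,
then for every cyclic translation offset `δ`, `c₀` is also a cyclic crop of
`T_δ I` strictly maximizing `g` over the cyclic crops of `T_δ I`; consequently,
for any classifier `f`, the output of the crop-selection algorithm (apply `f`
to the unique score-maximizing cyclic crop) on `T_δ I` equals its output on
`I`: no integer cyclic translation can alter the output. -/
theorem cyclic_rics_invariant {Y : Type*} (N : ℕ) (hN : 0 < N) (k : ℕ)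
    (I : ZMod N × ZMod N → ℝ) (g : (Fin k × Fin k → ℝ) → ℝ)
    (c₀ : Fin k × Fin k → ℝ)
    (hc₀ : c₀ ∈ Set.range (cyclicCrop k I))
    (hmax : ∀ c ∈ Set.range (cyclicCrop k I), c ≠ c₀ → g c < g c₀)
    (f : (Fin k × Fin k → ℝ) → Y) :
    ∀ δ : ZMod N × ZMod N,
      c₀ ∈ Set.range (cyclicCrop k (cyclicTranslate δ I)) ∧
      (∀ c ∈ Set.range (cyclicCrop k (cyclicTranslate δ I)), c ≠ c₀ → g c < g c₀) ∧
      (∀ c ∈ Set.range (cyclicCrop k (cyclicTranslate δ I)),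
        (∀ c' ∈ Set.range (cyclicCrop k (cyclicTranslate δ I)), c' ≠ c → g c' < g c) →
          f c = f c₀) :=
  cyclic_rics_invariant_general N k I g c₀ hc₀ hmax f
end
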